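/- arXiv:1908.11851 — 2 statements merged into one kernel-verified Lean document; each statement's English description precedes it below -/
import Mathlib

section
/- Let A ∈ ℝ^{n×n}, and suppose W_{m+1} = [W_m, 𝒲_{m+1}] ∈ ℝ^{n×(r_m+r')} and Q_{m+1} = [Q_m, 𝒬_{m+1}] ∈ ℝ^{n×(q_m+q')} have orthonormal columns and satisfy the Arnoldi relations A Q_m = Q_m H_m + 𝒬_{m+1} G and A W_m = W_m T_m + 𝒲_{m+1} S, where H_m = Q_mᵀ A Q_m, T_m = W_mᵀ A W_m, G = 𝒬_{m+1}ᵀ A Q_m, S = 𝒲_{m+1}ᵀ A W_m. If Y solves the projected equation (T_m ⊗ I + I ⊗ H_m) Y − Y Σᵀ = C̃ for some Σ ∈ ℝ^{ℓ×ℓ} and C̃ = (W_m ⊗ Q_m)ᵀ C with C in the range of (W_m ⊗ Q_m) acting on the left, then the residual R = (A ⊗ I_n + I_n ⊗ A)(W_m ⊗ Q_m) Y − (W_m ⊗ Q_m) Y Σᵀ − C satisfies ‖R‖_F² = ‖(S ⊗ I) Y‖_F² + ‖(I ⊗ G) Y‖_F². -/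
/-!
Both Arnoldi relations lift to the tensor basis: `(A ⊗ I)(W ⊗ Q) = (W ⊗ Q)(T ⊗ I) + (W' ⊗ Q)(S ⊗ I)`
and `(I ⊗ A)(W ⊗ Q) = (W ⊗ Q)(I ⊗ H) + (W ⊗ Q')(I ⊗ G)`. Since `C` lies in the range of `W ⊗ Q`,
the projected equation makes every component of the residual along `W ⊗ Q` cancel, leaving
`R = (W' ⊗ Q)(S ⊗ I)Y + (W ⊗ Q')(I ⊗ G)Y`. The two tensor bases have orthonormal columns and
orthogonal ranges, so Pythagoras for the Frobenius norm gives the identity.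
-/

open Matrix
open scoped Kronecker

attribute [local instance] Matrix.frobeniusNormedAddCommGroup

namespace Matrix

variable {k l m n p q : Type*}

section Frobenius

variable [Fintype k] [Fintype m] [Fintype n] [Fintype p]

lemma frobenius_norm_sq_eq_trace (M : Matrix m n ℝ) : ‖M‖ ^ 2 = trace (Mᵀ * M) := by
  have hsum : (0 : ℝ) ≤ ∑ i, ∑ j, ‖M i j‖ ^ (2 : ℝ) := by positivity
  rw [frobenius_norm_def, ← Real.rpow_natCast _ 2, ← Real.rpow_mul hsum]
  norm_num [trace, mul_apply, Finset.sum_comm (γ := m), sq]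

lemma frobenius_norm_sq_mul_add_mul [DecidableEq n] [DecidableEq p]
    {U : Matrix m n ℝ} {V : Matrix m p ℝ} (hU : Uᵀ * U = 1) (hV : Vᵀ * V = 1)
    (hUV : Uᵀ * V = 0) (X : Matrix n k ℝ) (Z : Matrix p k ℝ) :
    ‖U * X + V * Z‖ ^ 2 = ‖X‖ ^ 2 + ‖Z‖ ^ 2 := by
  have hVU : Vᵀ * U = 0 := by rw [← transpose_transpose U, ← transpose_mul, hUV, transpose_zero]
  simp only [frobenius_norm_sq_eq_trace, transpose_add, transpose_mul, Matrix.add_mul,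
    Matrix.mul_add, Matrix.mul_assoc]
  rw [← Matrix.mul_assoc Uᵀ U, ← Matrix.mul_assoc Uᵀ V, ← Matrix.mul_assoc Vᵀ U,
    ← Matrix.mul_assoc Vᵀ V, hU, hV, hUV, hVU]
  simp only [Matrix.one_mul, Matrix.zero_mul, Matrix.mul_zero, trace_add, add_zero, zero_add]

end Frobenius

section Kronecker

variable {R : Type*} [CommSemiring R]

lemma kronecker_transpose_mul_kronecker [Fintype l] [Fintype m]
    (A : Matrix l k R) (B : Matrix m n R) (C : Matrix l p R) (D : Matrix m q R) :
    (A ⊗ₖ B)ᵀ * (C ⊗ₖ D) = (Aᵀ * C) ⊗ₖ (Bᵀ * D) := by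
  rw [← kroneckerMap_transpose, mul_kronecker_mul]

variable [Fintype k] [Fintype l] [Fintype m] [Fintype n] [Fintype p]

lemma kronecker_one_mul_kronecker_of_mul_eq [DecidableEq m] [DecidableEq n]
    {A : Matrix l l R} {W : Matrix l k R} {W' : Matrix l p R}
    {T : Matrix k k R} {S : Matrix p k R} (hAW : A * W = W * T + W' * S)
    (Q : Matrix m n R) :
    (A ⊗ₖ (1 : Matrix m m R)) * (W ⊗ₖ Q) = (W ⊗ₖ Q) * (T ⊗ₖ (1 : Matrix n n R))
      + (W' ⊗ₖ Q) * (S ⊗ₖ (1 : Matrix n n R)) := by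
  rw [← mul_kronecker_mul, ← mul_kronecker_mul, ← mul_kronecker_mul, hAW, Matrix.one_mul,
    Matrix.mul_one, add_kronecker]

lemma one_kronecker_mul_kronecker_of_mul_eq [DecidableEq k] [DecidableEq l]
    {B : Matrix m m R} {Q : Matrix m n R} {Q' : Matrix m p R}
    {H : Matrix n n R} {G : Matrix p n R} (hBQ : B * Q = Q * H + Q' * G)
    (W : Matrix l k R) :
    ((1 : Matrix l l R) ⊗ₖ B) * (W ⊗ₖ Q) = (W ⊗ₖ Q) * ((1 : Matrix k k R) ⊗ₖ H)
      + (W ⊗ₖ Q') * ((1 : Matrix k k R) ⊗ₖ G) := by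
  rw [← mul_kronecker_mul, ← mul_kronecker_mul, ← mul_kronecker_mul, hBQ, Matrix.one_mul,
    Matrix.mul_one, kronecker_add]

end Kronecker

section Residual

variable {R : Type*} [CommRing R] {r r' s s' o : Type*}
  [Fintype l] [Fintype m] [Fintype r] [Fintype r'] [Fintype s] [Fintype s'] [Fintype o]
  [DecidableEq l] [DecidableEq m] [DecidableEq r] [DecidableEq s]

theorem kroneckerSum_galerkin_residual_eq {A : Matrix l l R} {B : Matrix m m R}
    {W : Matrix l r R} {W' : Matrix l r' R} {Q : Matrix m s R} {Q' : Matrix m s' R}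
    {T : Matrix r r R} {S : Matrix r' r R} {H : Matrix s s R} {G : Matrix s' s R}
    (hAW : A * W = W * T + W' * S) (hBQ : B * Q = Q * H + Q' * G)
    (Sig : Matrix o o R) (C : Matrix (l × m) o R) (Y : Matrix (r × s) o R)
    (hproj : (W ⊗ₖ Q) * ((T ⊗ₖ (1 : Matrix s s R) + (1 : Matrix r r R) ⊗ₖ H) * Y - Y * Sigᵀ)
      = C) :
    (A ⊗ₖ (1 : Matrix m m R) + (1 : Matrix l l R) ⊗ₖ B) * ((W ⊗ₖ Q) * Y)
        - (W ⊗ₖ Q) * Y * Sigᵀ - C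
      = (W' ⊗ₖ Q) * ((S ⊗ₖ (1 : Matrix s s R)) * Y)
        + (W ⊗ₖ Q') * (((1 : Matrix r r R) ⊗ₖ G) * Y) := by
  rw [Matrix.add_mul, ← Matrix.mul_assoc, ← Matrix.mul_assoc,
    kronecker_one_mul_kronecker_of_mul_eq hAW, one_kronecker_mul_kronecker_of_mul_eq hBQ, ← hproj]
  simp only [Matrix.add_mul, Matrix.mul_add, Matrix.mul_sub, Matrix.mul_assoc]
  abel

end Residual

end Matrix

theorem stmt_14_general {n r r' q q' ℓ : ℕ}
    (A : Matrix (Fin n) (Fin n) ℝ)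
    (W : Matrix (Fin n) (Fin r) ℝ) (W' : Matrix (Fin n) (Fin r') ℝ)
    (Q : Matrix (Fin n) (Fin q) ℝ) (Q' : Matrix (Fin n) (Fin q') ℝ)
    (hW : Wᵀ * W = 1) (hW' : W'ᵀ * W' = 1)
    (hQ : Qᵀ * Q = 1) (hQ' : Q'ᵀ * Q' = 1) (hQQ' : Qᵀ * Q' = 0)
    (H : Matrix (Fin q) (Fin q) ℝ)
    (T : Matrix (Fin r) (Fin r) ℝ)
    (G : Matrix (Fin q') (Fin q) ℝ)
    (S : Matrix (Fin r') (Fin r) ℝ)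
    (harnQ : A * Q = Q * H + Q' * G)
    (harnW : A * W = W * T + W' * S)
    (Sig : Matrix (Fin ℓ) (Fin ℓ) ℝ)
    (C : Matrix (Fin n × Fin n) (Fin ℓ) ℝ)
    (hC : C = (W ⊗ₖ Q) * ((W ⊗ₖ Q)ᵀ * C))
    (Y : Matrix (Fin r × Fin q) (Fin ℓ) ℝ)
    (hY : (T ⊗ₖ (1 : Matrix (Fin q) (Fin q) ℝ)
            + (1 : Matrix (Fin r) (Fin r) ℝ) ⊗ₖ H) * Y - Y * Sigᵀ = (W ⊗ₖ Q)ᵀ * C)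
    (R : Matrix (Fin n × Fin n) (Fin ℓ) ℝ)
    (hR : R = (A ⊗ₖ (1 : Matrix (Fin n) (Fin n) ℝ)
            + (1 : Matrix (Fin n) (Fin n) ℝ) ⊗ₖ A) * ((W ⊗ₖ Q) * Y)
          - (W ⊗ₖ Q) * Y * Sigᵀ - C) :
    ‖R‖ ^ 2 = ‖(S ⊗ₖ (1 : Matrix (Fin q) (Fin q) ℝ)) * Y‖ ^ 2
        + ‖((1 : Matrix (Fin r) (Fin r) ℝ) ⊗ₖ G) * Y‖ ^ 2 := by
  have hproj : (W ⊗ₖ Q) * ((T ⊗ₖ (1 : Matrix (Fin q) (Fin q) ℝ)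
      + (1 : Matrix (Fin r) (Fin r) ℝ) ⊗ₖ H) * Y - Y * Sigᵀ) = C := by
    rw [hY, ← hC]
  rw [hR, kroneckerSum_galerkin_residual_eq harnW harnQ Sig C Y hproj]
  apply frobenius_norm_sq_mul_add_mul
  · rw [kronecker_transpose_mul_kronecker, hW', hQ, one_kronecker_one]
  · rw [kronecker_transpose_mul_kronecker, hW, hQ', one_kronecker_one]
  · rw [kronecker_transpose_mul_kronecker, hQQ', kronecker_zero]

theorem stmt_14 {n r r' q q' ℓ : ℕ}
    (A : Matrix (Fin n) (Fin n) ℝ)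
    (W : Matrix (Fin n) (Fin r) ℝ) (W' : Matrix (Fin n) (Fin r') ℝ)
    (Q : Matrix (Fin n) (Fin q) ℝ) (Q' : Matrix (Fin n) (Fin q') ℝ)
    (hW : Wᵀ * W = 1) (hW' : W'ᵀ * W' = 1) (hWW' : Wᵀ * W' = 0)
    (hQ : Qᵀ * Q = 1) (hQ' : Q'ᵀ * Q' = 1) (hQQ' : Qᵀ * Q' = 0)
    (H : Matrix (Fin q) (Fin q) ℝ) (hH : H = Qᵀ * A * Q)
    (T : Matrix (Fin r) (Fin r) ℝ) (hT : T = Wᵀ * A * W)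
    (G : Matrix (Fin q') (Fin q) ℝ) (hG : G = Q'ᵀ * A * Q)
    (S : Matrix (Fin r') (Fin r) ℝ) (hS : S = W'ᵀ * A * W)
    (harnQ : A * Q = Q * H + Q' * G)
    (harnW : A * W = W * T + W' * S)
    (Sig : Matrix (Fin ℓ) (Fin ℓ) ℝ)
    (C : Matrix (Fin n × Fin n) (Fin ℓ) ℝ)
    (hC : C = (W ⊗ₖ Q) * ((W ⊗ₖ Q)ᵀ * C))
    (Y : Matrix (Fin r × Fin q) (Fin ℓ) ℝ)
    (hY : (T ⊗ₖ (1 : Matrix (Fin q) (Fin q) ℝ)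
            + (1 : Matrix (Fin r) (Fin r) ℝ) ⊗ₖ H) * Y - Y * Sigᵀ = (W ⊗ₖ Q)ᵀ * C)
    (R : Matrix (Fin n × Fin n) (Fin ℓ) ℝ)
    (hR : R = (A ⊗ₖ (1 : Matrix (Fin n) (Fin n) ℝ)
            + (1 : Matrix (Fin n) (Fin n) ℝ) ⊗ₖ A) * ((W ⊗ₖ Q) * Y)
          - (W ⊗ₖ Q) * Y * Sigᵀ - C) :
    ‖R‖ ^ 2 = ‖(S ⊗ₖ (1 : Matrix (Fin q) (Fin q) ℝ)) * Y‖ ^ 2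
        + ‖((1 : Matrix (Fin r) (Fin r) ℝ) ⊗ₖ G) * Y‖ ^ 2 :=
  stmt_14_general A W W' Q Q' hW hW' hQ hQ' hQQ' H T G S harnQ harnW Sig C hC Y hY R hR
end

section
/- Let V_m ∈ ℝ^{N×r} have orthonormal columns and suppose the rational-Arnoldi relation A V_m = V_m T_m + 𝒱_{m+1} E ξ H̄ H⁻¹ − (I − V_m V_mᵀ) A 𝒱_{m+1} E H̄ H⁻¹ holds, where T_m = V_mᵀ A V_m, 𝒱_{m+1} has orthonormal columns orthogonal to V_m, ξ ∈ ℝ, and E H̄ H⁻¹ ∈ ℝ^{p×r} is a given matrix B. If Y solves T_m Y − Y Σᵀ = V_mᵀ C with C = V_m V_mᵀ C, then the residual R_m = A V_m Y − V_m Y Σᵀ − C satisfies R_m = (ξ I − (I − V_m V_mᵀ) A) 𝒱_{m+1} B Y, and hence ‖R_m‖_F = ‖(ξ I − (I − V_m V_mᵀ) A) 𝒱_{m+1} B Y‖_F. -/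
open Matrix

attribute [local instance] Matrix.frobeniusNormedAddCommGroup

/-- The Galerkin condition makes the part `V (T Y - Y S) - C` of the residual vanish. -/
theorem Matrix.residual_eq_remainder_mul_of_galerkin {R m n l : Type*} [Ring R]
    [Fintype m] [Fintype n] [Fintype l]
    {A : Matrix n n R} {V : Matrix n m R} {T : Matrix m m R} {W : Matrix n m R}
    {U : Matrix m n R} {C : Matrix n l R} {Y : Matrix m l R} {S : Matrix l l R}
    (hAV : A * V = V * T + W) (hY : T * Y - Y * S = U * C) (hC : V * (U * C) = C) :
    A * (V * Y) - V * Y * S - C = W * Y := by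
  have hVY : V * (T * Y) - V * Y * S = C := by
    rw [Matrix.mul_assoc, ← Matrix.mul_sub, hY, hC]
  rw [← Matrix.mul_assoc, hAV, Matrix.add_mul, Matrix.mul_assoc, ← hVY]
  abel

theorem stmt_17_general {N r p ℓ : ℕ}
    (A : Matrix (Fin N) (Fin N) ℝ)
    (V : Matrix (Fin N) (Fin r) ℝ)
    (T : Matrix (Fin r) (Fin r) ℝ)
    (V' : Matrix (Fin N) (Fin p) ℝ)
    (ξ : ℝ) (B : Matrix (Fin p) (Fin r) ℝ)
    (harn : A * V = V * T + V' * (ξ • B)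
              - ((1 : Matrix (Fin N) (Fin N) ℝ) - V * Vᵀ) * A * (V' * B))
    (Sig : Matrix (Fin ℓ) (Fin ℓ) ℝ)
    (C : Matrix (Fin N) (Fin ℓ) ℝ) (hC : C = V * (Vᵀ * C))
    (Y : Matrix (Fin r) (Fin ℓ) ℝ)
    (hY : T * Y - Y * Sigᵀ = Vᵀ * C)
    (Rm : Matrix (Fin N) (Fin ℓ) ℝ)
    (hRm : Rm = A * (V * Y) - (V * Y) * Sigᵀ - C) :
    Rm = (ξ • (1 : Matrix (Fin N) (Fin N) ℝ)
            - ((1 : Matrix (Fin N) (Fin N) ℝ) - V * Vᵀ) * A) * (V' * (B * Y))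
      ∧ ‖Rm‖ = ‖(ξ • (1 : Matrix (Fin N) (Fin N) ℝ)
            - ((1 : Matrix (Fin N) (Fin N) ℝ) - V * Vᵀ) * A) * (V' * (B * Y))‖ := by
  rw [add_sub_assoc] at harn
  have hres : Rm = (ξ • (1 : Matrix (Fin N) (Fin N) ℝ)
      - ((1 : Matrix (Fin N) (Fin N) ℝ) - V * Vᵀ) * A) * (V' * (B * Y)) := by
    rw [hRm, residual_eq_remainder_mul_of_galerkin harn hY hC.symm]
    simp only [Matrix.sub_mul, Matrix.smul_mul, Matrix.mul_smul, Matrix.one_mul,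
      Matrix.mul_assoc]
  exact ⟨hres, congrArg norm hres⟩

theorem stmt_17 {N r p ℓ : ℕ}
    (A : Matrix (Fin N) (Fin N) ℝ)
    (V : Matrix (Fin N) (Fin r) ℝ) (hV : Vᵀ * V = 1)
    (T : Matrix (Fin r) (Fin r) ℝ) (hT : T = Vᵀ * A * V)
    (V' : Matrix (Fin N) (Fin p) ℝ) (hV' : V'ᵀ * V' = 1) (hVV' : Vᵀ * V' = 0)
    (ξ : ℝ) (B : Matrix (Fin p) (Fin r) ℝ)
    (harn : A * V = V * T + V' * (ξ • B)
              - ((1 : Matrix (Fin N) (Fin N) ℝ) - V * Vᵀ) * A * (V' * B))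
    (Sig : Matrix (Fin ℓ) (Fin ℓ) ℝ)
    (C : Matrix (Fin N) (Fin ℓ) ℝ) (hC : C = V * (Vᵀ * C))
    (Y : Matrix (Fin r) (Fin ℓ) ℝ)
    (hY : T * Y - Y * Sigᵀ = Vᵀ * C)
    (Rm : Matrix (Fin N) (Fin ℓ) ℝ)
    (hRm : Rm = A * (V * Y) - (V * Y) * Sigᵀ - C) :
    Rm = (ξ • (1 : Matrix (Fin N) (Fin N) ℝ)
            - ((1 : Matrix (Fin N) (Fin N) ℝ) - V * Vᵀ) * A) * (V' * (B * Y))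
      ∧ ‖Rm‖ = ‖(ξ • (1 : Matrix (Fin N) (Fin N) ℝ)
            - ((1 : Matrix (Fin N) (Fin N) ℝ) - V * Vᵀ) * A) * (V' * (B * Y))‖ :=
  stmt_17_general A V T V' ξ B harn Sig C hC Y hY Rm hRm
end
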